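/- arXiv:2202.05642 — 5 statements merged into one kernel-verified Lean document; each statement's English description precedes it below -/
import Mathlib

section
/- Let b = (b_ij) be a real 2×2 matrix with Δ := (b22 − b11)² + 4·b12·b21 > 0 and b12·b21 ≠ 0, and set λ1 = (−b11 − b22 + √Δ)/2, λ2 = λ1 − √Δ. Then for all t ≥ 0, the row sums π'₁(0,t), π'₂(0,t) of exp(−t·b) satisfy: π'₁(0,t) = [b12·(b22 − b11 + 2·b21 − √Δ) / (√Δ·(√Δ + b11 − b22))]·e^{λ1 t} − [b12·(√Δ + b22 − b11 + 2·b21) / (√Δ·(−√Δ + b11 − b22))]·e^{λ2 t}, and π'₂(0,t) = [(b11 − b22 − 2·b21 + √Δ)/(2√Δ)]·e^{λ1 t} + [(√Δ + b22 − b11 + 2·b21)/(2√Δ)]·e^{λ2 t}. (The hypotheses Δ > 0 and b12·b21 ≠ 0 guarantee √Δ ≠ |b11 − b22|, so all denominators are nonzero.) -/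
/-!
Since `λ1 + λ2 = tr (-b)` and `λ1 λ2 = det (-b)`, Cayley–Hamilton gives
`(-b - λ1) (-b - λ2) = 0`, and `λ1 - λ2 = √Δ ≠ 0`. Hence `e = (-b - λ2) / (λ1 - λ2)` is an
idempotent with `-b = λ1 e + λ2 (1 - e)`, and since `(x, y) ↦ x e + y (1 - e)` is a continuous ring
homomorphism `ℝ × ℝ → M₂(ℝ)`, it commutes with `exp`:
`exp (-t b) = e^{λ1 t} e + e^{λ2 t} (1 - e)` (Sylvester's formula). The row sums of this matrix
are the stated ones after the denominators are cleared with
`(√Δ + b11 - b22) (√Δ - b11 + b22) = 4 b12 b21`.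
-/

open Matrix Real

/-- The paper's `π'ᵢ(0, t)`, with the paper's indices `1, 2` shifted to `0, 1`. -/
noncomputable def rowSum0 (b : Matrix (Fin 2) (Fin 2) ℝ) (t : ℝ) (i : Fin 2) : ℝ :=
  (NormedSpace.exp ((-t) • b) *ᵥ ![1, 1]) i

namespace IsIdempotentElem

def prodRingHom {R 𝔸 : Type*} [CommRing R] [Ring 𝔸] [Algebra R 𝔸] {e : 𝔸}
    (he : IsIdempotentElem e) : R × R →+* 𝔸 where
  toFun p := p.1 • e + p.2 • (1 - e)
  map_one' := by simp
  map_mul' p q := by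
    have h₁ : e * (1 - e) = 0 := by rw [mul_sub, mul_one, he.eq, sub_self]
    have h₂ : (1 - e) * e = 0 := by rw [sub_mul, one_mul, he.eq, sub_self]
    simp only [Prod.fst_mul, Prod.snd_mul, add_mul, mul_add, smul_mul_smul, he.eq, h₁, h₂,
      he.one_sub.eq, smul_zero, add_zero, zero_add]
  map_zero' := by simp
  map_add' p q := by simp only [Prod.fst_add, Prod.snd_add, add_smul]; abel

theorem exp_smul_add_smul_one_sub {𝔸 : Type*} [NormedRing 𝔸] [NormedAlgebra ℝ 𝔸] {e : 𝔸}
    (he : IsIdempotentElem e) (x y : ℝ) :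
    NormedSpace.exp (x • e + y • (1 - e)) = Real.exp x • e + Real.exp y • (1 - e) := by
  have hcont : Continuous (he.prodRingHom (R := ℝ)) := by
    change Continuous fun p : ℝ × ℝ => p.1 • e + p.2 • (1 - e)
    fun_prop
  have hexp_prod : NormedSpace.exp (x, y) = (Real.exp x, Real.exp y) := by
    ext <;> simp [Real.exp_eq_exp_ℝ]
  have hmap := NormedSpace.map_exp_of_mem_ball (𝕂 := ℝ) he.prodRingHom hcont (x, y)
    ((NormedSpace.expSeries_radius_eq_top ℝ (ℝ × ℝ)).symm ▸ edist_lt_top _ _)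
  rw [hexp_prod] at hmap
  exact hmap.symm

end IsIdempotentElem

/-- Sylvester's formula. -/
theorem NormedSpace.exp_smul_of_sub_mul_sub_eq_zero {𝔸 : Type*} [NormedRing 𝔸]
    [NormedAlgebra ℝ 𝔸] {a : 𝔸} {μ ν : ℝ} (hμν : μ ≠ ν)
    (h : (a - algebraMap ℝ 𝔸 μ) * (a - algebraMap ℝ 𝔸 ν) = 0) (t : ℝ) :
    exp (t • a) = (μ - ν)⁻¹ • (Real.exp (μ * t) • (a - algebraMap ℝ 𝔸 ν)
      - Real.exp (ν * t) • (a - algebraMap ℝ 𝔸 μ)) := by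
  have hμν' : μ - ν ≠ 0 := sub_ne_zero.mpr hμν
  set e := (μ - ν)⁻¹ • (a - algebraMap ℝ 𝔸 ν) with he_def
  have hsq : (a - algebraMap ℝ 𝔸 ν) * (a - algebraMap ℝ 𝔸 ν) = (μ - ν) • (a - algebraMap ℝ 𝔸 ν) :=
    calc (a - algebraMap ℝ 𝔸 ν) * (a - algebraMap ℝ 𝔸 ν)
        = (a - algebraMap ℝ 𝔸 μ) * (a - algebraMap ℝ 𝔸 ν)
          + algebraMap ℝ 𝔸 (μ - ν) * (a - algebraMap ℝ 𝔸 ν) := by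
          rw [← add_mul, map_sub, sub_add_sub_cancel]
      _ = (μ - ν) • (a - algebraMap ℝ 𝔸 ν) := by rw [h, zero_add, Algebra.smul_def]
  have he : IsIdempotentElem e := by
    rw [IsIdempotentElem, he_def, smul_mul_smul, hsq, smul_smul, mul_assoc,
      inv_mul_cancel₀ hμν', mul_one]
  have ha : t • a = (μ * t) • e + (ν * t) • (1 - e) := by
    rw [he_def, Algebra.algebraMap_eq_smul_one]
    match_scalars <;> field_simp <;> ring
  have hone_sub : 1 - e = -(μ - ν)⁻¹ • (a - algebraMap ℝ 𝔸 μ) := by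
    rw [he_def, Algebra.algebraMap_eq_smul_one, Algebra.algebraMap_eq_smul_one]
    match_scalars <;> field_simp; ring
  rw [ha, he.exp_smul_add_smul_one_sub, hone_sub, he_def]
  module

theorem Matrix.sub_algebraMap_mul_sub_algebraMap_eq_zero {R n : Type*} [CommRing R] [Fintype n]
    [DecidableEq n] (A : Matrix n n R) (hn : Fintype.card n = 2) {μ ν : R}
    (hsum : μ + ν = A.trace) (hprod : μ * ν = A.det) :
    (A - algebraMap R _ μ) * (A - algebraMap R _ ν) = 0 := by
  nontriviality R
  have hCH := A.aeval_self_charpoly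
  rw [A.charpoly_of_card_eq_two hn, ← hsum, ← hprod] at hCH
  simp only [map_add, map_sub, map_mul, Polynomial.aeval_X_pow, Polynomial.aeval_C,
    Polynomial.aeval_X] at hCH
  rw [← hCH]
  simp only [Algebra.algebraMap_eq_smul_one, sub_mul, mul_sub, smul_mul_assoc, mul_smul_comm,
    add_mul, mul_one, one_mul, pow_two, smul_smul]
  module

theorem rowSum0_eq_of_sub_mul_sub_eq_zero (b : Matrix (Fin 2) (Fin 2) ℝ) {μ ν : ℝ} (hμν : μ ≠ ν)
    (h : (-b - algebraMap ℝ _ μ) * (-b - algebraMap ℝ _ ν) = 0) (t : ℝ) (i : Fin 2) :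
    rowSum0 b t i = (μ - ν)⁻¹ * (Real.exp (μ * t) * (-(b i 0 + b i 1) - ν)
      - Real.exp (ν * t) * (-(b i 0 + b i 1) - μ)) := by
  have hexp : NormedSpace.exp (t • -b) = (μ - ν)⁻¹ • (Real.exp (μ * t) • (-b - algebraMap ℝ _ ν)
      - Real.exp (ν * t) • (-b - algebraMap ℝ _ μ)) := by
    -- `exp` does not depend on the norm, so any Banach algebra norm on matrices will do
    let := Matrix.linftyOpNormedRing (n := Fin 2) (α := ℝ)
    let := Matrix.linftyOpNormedAlgebra (n := Fin 2) (R := ℝ) (α := ℝ)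
    exact NormedSpace.exp_smul_of_sub_mul_sub_eq_zero hμν h t
  rw [rowSum0, neg_smul, ← smul_neg, hexp]
  fin_cases i <;>
    simp [Matrix.mulVec, dotProduct, Fin.sum_univ_two, Matrix.algebraMap_matrix_apply] <;> ring

/-- Explicit formulas for the row sums `π'₁(0,t)`, `π'₂(0,t)` of `exp(−t·b)` in terms of
`λ1 = (−b11 − b22 + √Δ)/2` and `λ2 = λ1 − √Δ`, when `Δ = (b22 − b11)² + 4 b12 b21 > 0`
and `b12 b21 ≠ 0`. -/
theorem stmt3 (b : Matrix (Fin 2) (Fin 2) ℝ)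
    (Δ : ℝ) (hΔdef : Δ = (b 1 1 - b 0 0) ^ 2 + 4 * b 0 1 * b 1 0) (hΔ : 0 < Δ)
    (hb : b 0 1 * b 1 0 ≠ 0)
    (lam1 lam2 : ℝ)
    (hlam1 : lam1 = (-(b 0 0) - b 1 1 + Real.sqrt Δ) / 2)
    (hlam2 : lam2 = lam1 - Real.sqrt Δ) :
    ∀ t : ℝ, 0 ≤ t →
      rowSum0 b t 0
        = b 0 1 * (b 1 1 - b 0 0 + 2 * b 1 0 - Real.sqrt Δ)
              / (Real.sqrt Δ * (Real.sqrt Δ + b 0 0 - b 1 1)) * Real.exp (lam1 * t)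
          - b 0 1 * (Real.sqrt Δ + b 1 1 - b 0 0 + 2 * b 1 0)
              / (Real.sqrt Δ * (-Real.sqrt Δ + b 0 0 - b 1 1)) * Real.exp (lam2 * t) ∧
      rowSum0 b t 1
        = (b 0 0 - b 1 1 - 2 * b 1 0 + Real.sqrt Δ) / (2 * Real.sqrt Δ) * Real.exp (lam1 * t)
          + (Real.sqrt Δ + b 1 1 - b 0 0 + 2 * b 1 0) / (2 * Real.sqrt Δ)
              * Real.exp (lam2 * t) := by
  intro t _
  set s := Real.sqrt Δ
  have hs : s ^ 2 = Δ := Real.sq_sqrt hΔ.le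
  have hs0 : s ≠ 0 := (Real.sqrt_pos.mpr hΔ).ne'
  have hroots : (-b - algebraMap ℝ _ lam1) * (-b - algebraMap ℝ _ lam2) = 0 := by
    refine (-b).sub_algebraMap_mul_sub_algebraMap_eq_zero (Fintype.card_fin 2) ?_ ?_
    · simp [trace_fin_two, hlam2, hlam1]; ring
    · simp [det_fin_two, hlam2, hlam1]; linear_combination (-1/4) * hs - (1/4) * hΔdef
  have hrow := rowSum0_eq_of_sub_mul_sub_eq_zero b (fun h => hs0 (by linarith)) hroots t
  have hdisc : (s + b 0 0 - b 1 1) * (-s + b 0 0 - b 1 1) = -4 * (b 0 1 * b 1 0) := by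
    linear_combination (-1) * hs - hΔdef
  obtain ⟨hd₁, hd₂⟩ := mul_ne_zero_iff.mp (hdisc ▸ mul_ne_zero (by norm_num) hb)
  have c₁ : s⁻¹ * (-(b 0 0 + b 0 1) - lam2)
      = b 0 1 * (b 1 1 - b 0 0 + 2 * b 1 0 - s) / (s * (s + b 0 0 - b 1 1)) := by
    rw [hlam2, hlam1]; field_simp; linear_combination hs + hΔdef
  have c₂ : s⁻¹ * (-(b 0 0 + b 0 1) - lam1)
      = b 0 1 * (s + b 1 1 - b 0 0 + 2 * b 1 0) / (s * (-s + b 0 0 - b 1 1)) := by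
    rw [hlam1]; field_simp; linear_combination hs + hΔdef
  have c₃ : s⁻¹ * (-(b 1 0 + b 1 1) - lam2) = (b 0 0 - b 1 1 - 2 * b 1 0 + s) / (2 * s) := by
    rw [hlam2, hlam1]; field_simp; ring
  have c₄ : s⁻¹ * (-(b 1 0 + b 1 1) - lam1) = -((s + b 1 1 - b 0 0 + 2 * b 1 0) / (2 * s)) := by
    rw [hlam1]; field_simp; ring
  rw [hrow 0, hrow 1, show lam1 - lam2 = s by rw [hlam2]; ring]
  exact ⟨by linear_combination Real.exp (lam1 * t) * c₁ - Real.exp (lam2 * t) * c₂,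
    by linear_combination Real.exp (lam1 * t) * c₃ - Real.exp (lam2 * t) * c₄⟩
end

section
/- Let b = (b_ij) be a real 2×2 matrix with b12 < 0 and b21 < 0 (so that Δ := (b22 − b11)² + 4·b12·b21 > 0 and √Δ + b11 − b22 > 0), set λ1 = (−b11 − b22 + √Δ)/2, λ2 = λ1 − √Δ and ε := √Δ + b22 − b11 + 2·b21, and suppose ε < 0. Then θ₁₁ := −b12·(2√Δ − ε)/(√Δ·(√Δ + b11 − b22)) lies in (0,1), θ₁₂ := (2√Δ − ε)/(2√Δ) > 0, and for all t ≥ 0 the row sums of exp(−t·b) satisfy π'₁(0,t) = θ₁₁·e^{λ1 t} + (1 − θ₁₁)·e^{λ2 t} and π'₂(0,t) ≤ θ₁₂·e^{λ1 t} + e^{λ2 t}. -/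
/-!
Since `−b` has the two distinct eigenvalues `λ₁, λ₂`, Sylvester's formula writes `exp(−t b)` as
`e^{λ₁ t} P + e^{λ₂ t} (1 − P)` for the spectral idempotent `P = (−b − λ₂)/(λ₁ − λ₂)`; it holds
because `exp` commutes with the algebra map `ℝ × ℝ → 𝔸, (x, y) ↦ x P + y (1 − P)`. Taking row sums,
each `π'ᵢ(0,t)` is an affine combination `cᵢ e^{λ₁ t} + (1 − cᵢ) e^{λ₂ t}`, and the sign
conditions on `b` and `ε` identify `c₁ = θ₁₁ ∈ (0,1)` and `c₂ = θ₁₂ > 0`.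
-/

open Matrix Real

section SpectralIdempotents

variable {𝔸 : Type*} [NormedRing 𝔸] [NormedAlgebra ℝ 𝔸]

noncomputable def IsIdempotentElem.prodAlgHom {p : 𝔸} (hp : IsIdempotentElem p) :
    ℝ × ℝ →ₐ[ℝ] 𝔸 :=
  AlgHom.ofLinearMap
    ((LinearMap.fst ℝ ℝ ℝ).smulRight p + (LinearMap.snd ℝ ℝ ℝ).smulRight (1 - p))
    (by simp)
    (by
      rintro ⟨x₁, y₁⟩ ⟨x₂, y₂⟩
      simp only [LinearMap.add_apply, LinearMap.smulRight_apply, LinearMap.fst_apply,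
        LinearMap.snd_apply, Prod.mk_mul_mk, add_mul, mul_add, smul_mul_smul_comm, hp.eq,
        hp.one_sub.eq, mul_sub, sub_mul, mul_one, one_mul, sub_self, smul_zero, add_zero,
        zero_add])

theorem IsIdempotentElem.exp_smul_add_smul_one_sub_s4 {p : 𝔸} (hp : IsIdempotentElem p)
    (x y : ℝ) :
    NormedSpace.exp (x • p + y • (1 - p)) = Real.exp x • p + Real.exp y • (1 - p) := by
  have hcont : Continuous hp.prodAlgHom :=
    LinearMap.continuous_of_finiteDimensional hp.prodAlgHom.toLinearMap
  have := NormedSpace.map_exp_of_mem_ball (𝕂 := ℝ) hp.prodAlgHom hcont (x, y)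
    ((NormedSpace.expSeries_radius_eq_top ℝ (ℝ × ℝ)).symm ▸ edist_lt_top _ _)
  simpa [IsIdempotentElem.prodAlgHom, Real.exp_eq_exp_ℝ] using this.symm

theorem exp_smul_eq_of_sub_mul_sub_eq_zero {a : 𝔸} {μ ν : ℝ} (hμν : μ ≠ ν)
    (ha : (a - algebraMap ℝ 𝔸 μ) * (a - algebraMap ℝ 𝔸 ν) = 0) (t : ℝ) :
    NormedSpace.exp (t • a) = Real.exp (t * μ) • (μ - ν)⁻¹ • (a - algebraMap ℝ 𝔸 ν)
      + Real.exp (t * ν) • (ν - μ)⁻¹ • (a - algebraMap ℝ 𝔸 μ) := by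
  have hsub : μ - ν ≠ 0 := sub_ne_zero.2 hμν
  simp only [Algebra.algebraMap_eq_smul_one] at ha ⊢
  set p := (μ - ν)⁻¹ • (a - ν • (1 : 𝔸)) with hp_def
  have hq : 1 - p = (ν - μ)⁻¹ • (a - μ • 1) := by
    rw [hp_def]
    match_scalars <;> field_simp <;> ring
  have hsq : (a - ν • (1 : 𝔸)) * (a - ν • 1) = (μ - ν) • (a - ν • 1) :=
    calc (a - ν • (1 : 𝔸)) * (a - ν • 1) = (a - μ • 1 + (μ - ν) • 1) * (a - ν • 1) := by
          congr 1; module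
      _ = (μ - ν) • (a - ν • 1) := by rw [add_mul, ha, zero_add, smul_one_mul]
  have hp : IsIdempotentElem p := by
    rw [IsIdempotentElem, hp_def, smul_mul_smul_comm, hsq, smul_smul]
    congr 1
    field_simp
  have hta : t • a = (t * μ) • p + (t * ν) • (1 - p) := by
    rw [hq, hp_def]
    match_scalars <;> field_simp <;> ring
  rw [hta, hp.exp_smul_add_smul_one_sub_s4, hq]

end SpectralIdempotents

theorem Matrix.exp_smul_eq_of_sub_mul_sub_eq_zero {n : Type*} [Fintype n] [DecidableEq n]
    {A : Matrix n n ℝ} {μ ν : ℝ} (hμν : μ ≠ ν)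
    (hA : (A - algebraMap ℝ _ μ) * (A - algebraMap ℝ _ ν) = 0) (t : ℝ) :
    NormedSpace.exp (t • A) = Real.exp (t * μ) • (μ - ν)⁻¹ • (A - algebraMap ℝ _ ν)
      + Real.exp (t * ν) • (ν - μ)⁻¹ • (A - algebraMap ℝ _ μ) :=
  -- `NormedSpace.exp` depends only on the topology, so any algebra norm inducing it will do
  let _ : NormedRing (Matrix n n ℝ) := Matrix.linftyOpNormedRing
  let _ : NormedAlgebra ℝ (Matrix n n ℝ) := Matrix.linftyOpNormedAlgebra
  _root_.exp_smul_eq_of_sub_mul_sub_eq_zero hμν hA t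

theorem Matrix.fin_two_sub_mul_sub_eq_zero {R : Type*} [CommRing R]
    (A : Matrix (Fin 2) (Fin 2) R) {μ ν : R} (hsum : μ + ν = A.trace) (hprod : μ * ν = A.det) :
    (A - algebraMap R _ μ) * (A - algebraMap R _ ν) = 0 := by
  rw [trace_fin_two] at hsum
  rw [det_fin_two] at hprod
  ext i j
  fin_cases i <;> fin_cases j <;>
    simp only [algebraMap_eq_diagonal, Fin.zero_eta, Fin.mk_one, Fin.isValue, mul_apply, sub_apply,
      Fin.sum_univ_two, diagonal_apply_eq, diagonal_apply_ne, Pi.algebraMap_apply,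
      Algebra.algebraMap_self, RingHom.id_apply, ne_eq, zero_ne_one, one_ne_zero,
      not_false_eq_true, sub_zero, zero_apply]
  · linear_combination (-A 0 0) * hsum + hprod
  · linear_combination (-A 0 1) * hsum
  · linear_combination (-A 1 0) * hsum
  · linear_combination (-A 1 1) * hsum + hprod

theorem rowSum0_eq {b : Matrix (Fin 2) (Fin 2) ℝ} {l₁ l₂ : ℝ} (hl : l₁ ≠ l₂)
    (hsum : l₁ + l₂ = -b.trace) (hprod : l₁ * l₂ = b.det) (t : ℝ) (i : Fin 2) :
    rowSum0 b t i = (l₂ + (b i 0 + b i 1)) / (l₂ - l₁) * Real.exp (l₁ * t)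
      + (1 - (l₂ + (b i 0 + b i 1)) / (l₂ - l₁)) * Real.exp (l₂ * t) := by
  have hquad : (-b - algebraMap ℝ _ l₁) * (-b - algebraMap ℝ _ l₂) = 0 :=
    (-b).fin_two_sub_mul_sub_eq_zero (by rw [trace_neg, hsum]) (by rw [det_neg]; simpa)
  have h₁₂ : l₁ - l₂ ≠ 0 := sub_ne_zero.2 hl
  have h₂₁ : l₂ - l₁ ≠ 0 := sub_ne_zero.2 hl.symm
  rw [rowSum0, neg_smul, ← smul_neg, Matrix.exp_smul_eq_of_sub_mul_sub_eq_zero hl hquad]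
  fin_cases i <;>
    simp only [mulVec, dotProduct, algebraMap_eq_diagonal, Fin.zero_eta, Fin.mk_one, Fin.isValue,
      Matrix.add_apply, Matrix.smul_apply, Matrix.sub_apply, Matrix.neg_apply, smul_eq_mul,
      Fin.sum_univ_two, diagonal_apply_eq, diagonal_apply_ne, Pi.algebraMap_apply,
      Algebra.algebraMap_self, ringHom_apply, ne_eq, zero_ne_one, one_ne_zero, not_false_eq_true,
      sub_zero, mul_neg, mul_one, cons_val_zero, cons_val_one, cons_val_fin_one] <;>
    field_simp <;> ring

/-- If `b12 < 0`, `b21 < 0` (so `Δ = (b22 − b11)² + 4 b12 b21 > 0` and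
`√Δ + b11 − b22 > 0`) and `ε = √Δ + b22 − b11 + 2 b21 < 0`, then with
`θ₁₁ = −b12(2√Δ − ε)/(√Δ(√Δ + b11 − b22)) ∈ (0,1)` and `θ₁₂ = (2√Δ − ε)/(2√Δ) > 0`
one has `π'₁(0,t) = θ₁₁ e^{λ1 t} + (1 − θ₁₁) e^{λ2 t}` and
`π'₂(0,t) ≤ θ₁₂ e^{λ1 t} + e^{λ2 t}` for all `t ≥ 0`. -/
theorem stmt4 (b : Matrix (Fin 2) (Fin 2) ℝ)
    (hb12 : b 0 1 < 0) (hb21 : b 1 0 < 0)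
    (Δ : ℝ) (hΔdef : Δ = (b 1 1 - b 0 0) ^ 2 + 4 * b 0 1 * b 1 0) (hΔ : 0 < Δ)
    (hden : 0 < Real.sqrt Δ + b 0 0 - b 1 1)
    (lam1 lam2 eps : ℝ)
    (hlam1 : lam1 = (-(b 0 0) - b 1 1 + Real.sqrt Δ) / 2)
    (hlam2 : lam2 = lam1 - Real.sqrt Δ)
    (heps : eps = Real.sqrt Δ + b 1 1 - b 0 0 + 2 * b 1 0)
    (hepsneg : eps < 0)
    (θ₁₁ θ₁₂ : ℝ)
    (hθ₁₁ : θ₁₁ = -(b 0 1) * (2 * Real.sqrt Δ - eps)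
        / (Real.sqrt Δ * (Real.sqrt Δ + b 0 0 - b 1 1)))
    (hθ₁₂ : θ₁₂ = (2 * Real.sqrt Δ - eps) / (2 * Real.sqrt Δ)) :
    θ₁₁ ∈ Set.Ioo (0 : ℝ) 1 ∧ 0 < θ₁₂ ∧
    ∀ t : ℝ, 0 ≤ t →
      rowSum0 b t 0 = θ₁₁ * Real.exp (lam1 * t) + (1 - θ₁₁) * Real.exp (lam2 * t) ∧
      rowSum0 b t 1 ≤ θ₁₂ * Real.exp (lam1 * t) + Real.exp (lam2 * t) := by
  have hs : 0 < √Δ := Real.sqrt_pos.2 hΔ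
  have hs2 : √Δ ^ 2 = (b 1 1 - b 0 0) ^ 2 + 4 * b 0 1 * b 1 0 := by rw [sq_sqrt hΔ.le, hΔdef]
  have hrow := rowSum0_eq (b := b) (l₁ := lam1) (l₂ := lam2) (by rw [hlam2]; linarith)
    (by rw [trace_fin_two, hlam2, hlam1]; ring)
    (by rw [det_fin_two, hlam2, hlam1]; linear_combination (-1 / 4 : ℝ) * hs2)
  have hgap : lam2 - lam1 = -√Δ := by rw [hlam2]; ring
  have hθ₁₁' : (lam2 + (b 0 0 + b 0 1)) / (lam2 - lam1) = θ₁₁ := by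
    rw [hθ₁₁, hgap, div_eq_div_iff (neg_ne_zero.2 hs.ne') (by positivity), hlam2, hlam1, heps]
    linear_combination (-1 / 2 : ℝ) * √Δ * hs2
  have hθ₁₂' : (lam2 + (b 1 0 + b 1 1)) / (lam2 - lam1) = θ₁₂ := by
    rw [hθ₁₂, hgap, hlam2, hlam1, heps]
    field_simp
    ring
  have hθ₁₂_pos : 0 < θ₁₂ := by rw [hθ₁₂]; exact div_pos (by linarith) (by positivity)
  have hθ₁₁_lt : θ₁₁ < 1 := by
    -- `(√Δ + b 1 1 - b 0 0) * (√Δ + b 0 0 - b 1 1) = 4 * b 0 1 * b 1 0`, and `ε < 0` bounds the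
    -- first factor by `-2 * b 1 0`
    have key : -2 * b 0 1 < √Δ + b 0 0 - b 1 1 := by
      nlinarith [mul_lt_mul_of_pos_right (show √Δ + b 1 1 - b 0 0 < -2 * b 1 0 by linarith) hden]
    rw [← hθ₁₁', hgap, div_lt_one_of_neg (by linarith), hlam2, hlam1]
    linarith
  refine ⟨⟨?_, hθ₁₁_lt⟩, hθ₁₂_pos, fun t _ => ⟨?_, ?_⟩⟩
  · rw [hθ₁₁]
    exact div_pos (mul_pos (by linarith) (by linarith)) (by positivity)
  · rw [hrow, hθ₁₁']
  · rw [hrow, hθ₁₂']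
    nlinarith [mul_pos hθ₁₂_pos (Real.exp_pos (lam2 * t))]
end

section
/- Let b = (b_ij) be a real 2×2 matrix with b12 < 0, b21 < 0 (so that Δ := (b22 − b11)² + 4·b12·b21 > 0), set λ1 = (−b11 − b22 + √Δ)/2 and ε := √Δ + b22 − b11 + 2·b21, and suppose ε = 0. Then for all t ≥ 0 the row sums of exp(−t·b) satisfy π'₁(0,t) = π'₂(0,t) = e^{λ1 t}. -/
/-! `ε = 0` says exactly that `(1, 1)` is an eigenvector of `b` with eigenvalue `−λ1`; then
`exp(−t·b)` acts on it as multiplication by `e^{λ1 t}`. -/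

open Matrix Real

namespace Matrix

theorem pow_mulVec_of_mulVec_eq_smul {m R : Type*} [Fintype m] [DecidableEq m] [CommSemiring R]
    {A : Matrix m m R} {v : m → R} {c : R} (h : A *ᵥ v = c • v) (n : ℕ) :
    A ^ n *ᵥ v = c ^ n • v := by
  induction n with
  | zero => simp
  | succ n ih =>
    rw [pow_succ, ← mulVec_mulVec, h, mulVec_smul, ih, smul_smul, pow_succ']

open scoped Norms.Operator in
theorem exp_mulVec_of_mulVec_eq_smul {m 𝕂 : Type*} [Fintype m] [DecidableEq m] [RCLike 𝕂]
    {A : Matrix m m 𝕂} {v : m → 𝕂} {c : 𝕂} (h : A *ᵥ v = c • v) :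
    NormedSpace.exp A *ᵥ v = NormedSpace.exp c • v := by
  have hA : HasSum (fun n : ℕ => ((n.factorial⁻¹ : 𝕂) • A ^ n) *ᵥ v)
      (NormedSpace.exp A *ᵥ v) :=
    (NormedSpace.exp_series_hasSum_exp' (𝕂 := 𝕂) A).map (mulVec.addMonoidHomLeft v)
      (continuous_id.matrix_mulVec continuous_const)
  have hc : HasSum (fun n : ℕ => (n.factorial⁻¹ : 𝕂) • c ^ n • v)
      (NormedSpace.exp c • v) := by
    simpa only [smul_smul, smul_eq_mul] using
      (NormedSpace.exp_series_hasSum_exp' (𝕂 := 𝕂) c).smul_const v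
  refine hA.unique ?_
  simpa only [smul_mulVec, pow_mulVec_of_mulVec_eq_smul h] using hc

end Matrix

theorem mulVec_one_one_of_rowSum_eq {b : Matrix (Fin 2) (Fin 2) ℝ}
    (h : b 0 0 + b 0 1 = b 1 0 + b 1 1) :
    b *ᵥ ![1, 1] = (b 1 0 + b 1 1) • ![1, 1] := by
  ext i
  fin_cases i <;> simp [mulVec, dotProduct, Fin.sum_univ_two, h]

theorem rowSum_eq_of_sqrt_discr_eq {b : Matrix (Fin 2) (Fin 2) ℝ} (hb21 : b 1 0 ≠ 0) {Δ : ℝ}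
    (hΔdef : Δ = (b 1 1 - b 0 0) ^ 2 + 4 * b 0 1 * b 1 0) (hΔ : 0 ≤ Δ)
    (hs : √Δ = b 0 0 - b 1 1 - 2 * b 1 0) :
    b 0 0 + b 0 1 = b 1 0 + b 1 1 := by
  have hsq : (b 0 0 - b 1 1 - 2 * b 1 0) ^ 2 = (b 1 1 - b 0 0) ^ 2 + 4 * b 0 1 * b 1 0 := by
    rw [← hs, sq_sqrt hΔ, hΔdef]
  have : 4 * b 1 0 * (b 0 0 + b 0 1 - b 1 0 - b 1 1) = 0 := by linear_combination -hsq
  have := (mul_eq_zero.mp this).resolve_left (by positivity)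
  linarith

theorem stmt6_general (b : Matrix (Fin 2) (Fin 2) ℝ)
    (hb21 : b 1 0 < 0)
    (Δ : ℝ) (hΔdef : Δ = (b 1 1 - b 0 0) ^ 2 + 4 * b 0 1 * b 1 0) (hΔ : 0 < Δ)
    (lam1 eps : ℝ)
    (hlam1 : lam1 = (-(b 0 0) - b 1 1 + Real.sqrt Δ) / 2)
    (heps : eps = Real.sqrt Δ + b 1 1 - b 0 0 + 2 * b 1 0)
    (hepszero : eps = 0) :
    ∀ t : ℝ, 0 ≤ t →
      rowSum0 b t 0 = Real.exp (lam1 * t) ∧ rowSum0 b t 1 = Real.exp (lam1 * t) := by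
  intro t _
  have hs : √Δ = b 0 0 - b 1 1 - 2 * b 1 0 := by linarith
  have hlam : lam1 = -(b 1 0 + b 1 1) := by rw [hlam1, hs]; ring
  have heig : ((-t) • b) *ᵥ ![1, 1] = (lam1 * t) • ![1, 1] := by
    rw [smul_mulVec, mulVec_one_one_of_rowSum_eq
      (rowSum_eq_of_sqrt_discr_eq hb21.ne hΔdef hΔ.le hs), smul_smul, hlam]
    ring_nf
  have hexp : NormedSpace.exp ((-t) • b) *ᵥ ![1, 1] = Real.exp (lam1 * t) • ![1, 1] := by
    rw [exp_mulVec_of_mulVec_eq_smul heig, Real.exp_eq_exp_ℝ]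
  simp only [rowSum0, hexp]
  simp

/-- If `b12 < 0`, `b21 < 0` (so `Δ = (b22 − b11)² + 4 b12 b21 > 0`) and
`ε = √Δ + b22 − b11 + 2 b21 = 0`, then both row sums of `exp(−t·b)` are equal to
`e^{λ1 t}` with `λ1 = (−b11 − b22 + √Δ)/2`, for all `t ≥ 0`. -/
theorem stmt6 (b : Matrix (Fin 2) (Fin 2) ℝ)
    (hb12 : b 0 1 < 0) (hb21 : b 1 0 < 0)
    (Δ : ℝ) (hΔdef : Δ = (b 1 1 - b 0 0) ^ 2 + 4 * b 0 1 * b 1 0) (hΔ : 0 < Δ)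
    (lam1 eps : ℝ)
    (hlam1 : lam1 = (-(b 0 0) - b 1 1 + Real.sqrt Δ) / 2)
    (heps : eps = Real.sqrt Δ + b 1 1 - b 0 0 + 2 * b 1 0)
    (hepszero : eps = 0) :
    ∀ t : ℝ, 0 ≤ t →
      rowSum0 b t 0 = Real.exp (lam1 * t) ∧ rowSum0 b t 1 = Real.exp (lam1 * t) :=
  stmt6_general b hb21 Δ hΔdef hΔ lam1 eps hlam1 heps hepszero
end

section
/- Let t ∈ ℝ, r0 ≤ t, and let ξ : [r0, t] → ℝ be measurable and bounded. Let φ1, φ2 : ℝ₊ → ℝ be locally Lipschitz functions with φ1(z) ≥ φ2(z) for all z ≥ 0, and let λ1 ≤ λ2 be nonnegative reals. Suppose v1, v2 : [r0, t] → ℝ₊ are continuous and satisfy v_i(r) = λ_i − ∫_r^t e^{ξ(s)}·φ_i(e^{−ξ(s)}·v_i(s)) ds for all r ∈ [r0, t] and i = 1, 2. Then v1(r) ≤ v2(r) for every r ∈ [r0, t]. -/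
/-!
Put `w = v1 - v2`. Subtracting the two equations gives `w r = (λ1 - λ2) + ∫_r^t (g2 - g1)`
with `gi s = e^{ξ s} φi(e^{-ξ s} vi s)`, and wherever `w ≥ 0` the inequality `φ2 ≤ φ1`
together with a Lipschitz constant `K` of `φ1` on the bounded range of the `e^{-ξ} vi` gives
`g2 - g1 ≤ K w`. Integrating from `r` up to the first point right of `r` where `w ≤ 0` yields
`w⁺ r ≤ K ∫_r^t w⁺`, and this backward Gronwall inequality, iterated to
`w⁺ r ≤ B (K (t - r))ⁿ / n!`, forces `w⁺ = 0`.
-/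

open MeasureTheory Real Set intervalIntegral Filter

theorem integral_mul_pow_div_factorial (B K r b : ℝ) (n : ℕ) :
    ∫ s in r..b, B * (K * (b - s)) ^ n / n.factorial =
      B * K ^ n * (b - r) ^ (n + 1) / (n + 1).factorial := by
  have h : ∫ s in r..b, (b - s) ^ n = (b - r) ^ (n + 1) / (n + 1) := by
    simp [integral_comp_sub_left fun x ↦ x ^ n, integral_pow]
  have hfun : (fun s ↦ B * (K * (b - s)) ^ n / n.factorial) =
      fun s ↦ B * K ^ n / n.factorial * (b - s) ^ n := by
    ext s; rw [mul_pow]; ring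
  rw [hfun, intervalIntegral.integral_const_mul, h]
  push_cast [Nat.factorial_succ]
  field_simp

theorem le_mul_pow_div_factorial_of_le_mul_integral {u : ℝ → ℝ} {a b K B : ℝ} (hK : 0 ≤ K)
    (hu : ContinuousOn u (Icc a b)) (hB : ∀ s ∈ Icc a b, u s ≤ B)
    (hle : ∀ r ∈ Icc a b, u r ≤ K * ∫ s in r..b, u s) (n : ℕ) :
    ∀ r ∈ Icc a b, u r ≤ B * (K * (b - r)) ^ n / n.factorial := by
  induction n with
  | zero => simpa using hB
  | succ n ih =>
    intro r hr
    have hint : IntervalIntegrable u volume r b :=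
      (hu.mono (uIcc_subset_Icc hr (right_mem_Icc.2 (hr.1.trans hr.2)))).intervalIntegrable
    calc u r ≤ K * ∫ s in r..b, u s := hle r hr
      _ ≤ K * ∫ s in r..b, B * (K * (b - s)) ^ n / n.factorial := by
        gcongr
        exact integral_mono_on hr.2 hint (Continuous.intervalIntegrable (by fun_prop) _ _)
          fun s hs ↦ ih s ⟨hr.1.trans hs.1, hs.2⟩
      _ = B * (K * (b - r)) ^ (n + 1) / (n + 1).factorial := by
        rw [integral_mul_pow_div_factorial, mul_pow]; ring

theorem nonpos_of_le_mul_integral {u : ℝ → ℝ} {a b K : ℝ} (hK : 0 ≤ K)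
    (hu : ContinuousOn u (Icc a b)) (hle : ∀ r ∈ Icc a b, u r ≤ K * ∫ s in r..b, u s) :
    ∀ r ∈ Icc a b, u r ≤ 0 := by
  obtain ⟨B, hB⟩ := isCompact_Icc.exists_bound_of_continuousOn hu
  intro r hr
  have hlim : Tendsto (fun n : ℕ ↦ B * ((K * (b - r)) ^ n / n.factorial)) atTop (nhds 0) := by
    simpa using (FloorSemiring.tendsto_pow_div_factorial_atTop (K * (b - r))).const_mul B
  refine ge_of_tendsto' hlim fun n ↦ ?_
  rw [← mul_div_assoc]
  exact le_mul_pow_div_factorial_of_le_mul_integral hK hu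
    (fun s hs ↦ (le_abs_self _).trans (hB s hs)) hle n r hr

theorem posPart_le_mul_integral_of_eq_add_integral {w g : ℝ → ℝ} {a b c K : ℝ} (hK : 0 ≤ K)
    (hc : c ≤ 0) (hw : ContinuousOn w (Icc a b)) (hg : IntegrableOn g (Icc a b))
    (hweq : ∀ r ∈ Icc a b, w r = c + ∫ s in r..b, g s)
    (hgle : ∀ s ∈ Icc a b, 0 ≤ w s → g s ≤ K * w s) :
    ∀ r ∈ Icc a b, max (w r) 0 ≤ K * ∫ s in r..b, max (w s) 0 := by
  intro r hr
  have hb : b ∈ Icc a b := right_mem_Icc.2 (hr.1.trans hr.2)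
  have hwK_int : ∀ {x y}, x ∈ Icc a b → y ∈ Icc a b →
      IntervalIntegrable (fun s ↦ K * max (w s) 0) volume x y := fun hx hy ↦
    ((continuousOn_const.mul (hw.sup continuousOn_const)).mono
      (uIcc_subset_Icc hx hy)).intervalIntegrable
  have hg_int : ∀ {x y}, x ∈ Icc a b → y ∈ Icc a b → IntervalIntegrable g volume x y :=
    fun hx hy ↦ (hg.mono_set (uIcc_subset_Icc hx hy)).intervalIntegrable
  refine max_le ?_ (mul_nonneg hK (integral_nonneg hr.2 fun _ _ ↦ le_max_right _ _))
  set S := Icc r b ∩ w ⁻¹' Iic 0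
  have hbS : b ∈ S := ⟨right_mem_Icc.2 hr.2, by
    simpa only [mem_preimage, mem_Iic, hweq b hb, integral_same, add_zero] using hc⟩
  have hS : IsClosed S :=
    (hw.mono (Icc_subset_Icc_left hr.1)).preimage_isClosed_of_isClosed isClosed_Icc isClosed_Iic
  have hSbdd : BddBelow S := ⟨r, fun x hx ↦ hx.1.1⟩
  obtain ⟨⟨hrr₁, hr₁b⟩, hwr₁⟩ : sInf S ∈ S := hS.csInf_mem ⟨b, hbS⟩ hSbdd
  set r₁ := sInf S
  have hr₁ : r₁ ∈ Icc a b := ⟨hr.1.trans hrr₁, hr₁b⟩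
  have hw_nonneg : ∀ s ∈ Ioo r r₁, 0 ≤ w s := fun s hs ↦ by
    by_contra! hws
    exact (csInf_le hSbdd ⟨⟨hs.1.le, hs.2.le.trans hr₁b⟩, hws.le⟩).not_gt hs.2
  calc w r = w r₁ + ∫ s in r..r₁, g s := by
        rw [hweq r hr, hweq r₁ hr₁, ← integral_add_adjacent_intervals (hg_int hr hr₁)
          (hg_int hr₁ hb)]
        ring
    _ ≤ ∫ s in r..r₁, K * max (w s) 0 := by
        refine add_le_of_nonpos_of_le hwr₁ (integral_mono_on_of_le_Ioo hrr₁ (hg_int hr hr₁)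
          (hwK_int hr hr₁) fun s hs ↦ ?_)
        have hs' : s ∈ Icc a b := ⟨hr.1.trans hs.1.le, hs.2.le.trans hr₁b⟩
        rw [max_eq_left (hw_nonneg s hs)]
        exact hgle s hs' (hw_nonneg s hs)
    _ ≤ ∫ s in r..b, K * max (w s) 0 :=
        integral_mono_interval le_rfl hrr₁ hr₁b
          (.of_forall fun s ↦ mul_nonneg hK (le_max_right _ _)) (hwK_int hr hb)
    _ = K * ∫ s in r..b, max (w s) 0 := integral_const_mul K _

theorem ContinuousOn.integrableOn_comp_of_mapsTo {φ f : ℝ → ℝ} {a b m M : ℝ}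
    (hφ : ContinuousOn φ (Icc m M)) (hf : AEMeasurable f (volume.restrict (Icc a b)))
    (hmaps : MapsTo f (Icc a b) (Icc m M)) : IntegrableOn (fun s ↦ φ (f s)) (Icc a b) := by
  rcases (Icc a b).eq_empty_or_nonempty with hab | ⟨x, hx⟩
  · simp [hab]
  have hmM : m ≤ M := (hmaps hx).1.trans (hmaps hx).2
  have hφ' : Continuous fun z ↦ φ (projIcc m M hmM z) :=
    hφ.comp_continuous (continuous_subtype_val.comp continuous_projIcc)
      fun z ↦ (projIcc m M hmM z).2
  obtain ⟨C, hC⟩ := isCompact_Icc.exists_bound_of_continuousOn hφ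
  refine (IntegrableOn.of_bound measure_Icc_lt_top
    (hφ'.comp_aestronglyMeasurable hf.aestronglyMeasurable) C ?_).congr_fun ?_ measurableSet_Icc
  · exact (ae_restrict_iff' measurableSet_Icc).2 (.of_forall fun s _ ↦ hC _ (projIcc m M hmM _).2)
  · intro s hs
    simp [projIcc_of_mem hmM (hmaps hs)]

theorem integrableOn_exp_mul_comp_exp_neg_mul {ξ v φ : ℝ → ℝ} {a b C M : ℝ} (hξ : Measurable ξ)
    (hξC : ∀ s ∈ Icc a b, |ξ s| ≤ C) (hv : ContinuousOn v (Icc a b))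
    (hφ : ContinuousOn φ (Icc 0 M)) (hmem : ∀ s ∈ Icc a b, exp (-ξ s) * v s ∈ Icc 0 M) :
    IntegrableOn (fun s ↦ exp (ξ s) * φ (exp (-ξ s) * v s)) (Icc a b) := by
  refine Integrable.bdd_mul (c := exp C)
    (hφ.integrableOn_comp_of_mapsTo ?_ hmem) ?_ ?_
  · exact ((measurable_exp.comp hξ.neg).aemeasurable).mul (hv.aemeasurable measurableSet_Icc)
  · exact (measurable_exp.comp hξ).aestronglyMeasurable
  · refine (ae_restrict_iff' measurableSet_Icc).2 (.of_forall fun s hs ↦ ?_)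
    rw [norm_of_nonneg (exp_pos _).le]
    exact exp_le_exp.2 ((le_abs_self _).trans (hξC s hs))

theorem exists_pos_forall_exp_neg_mul_mem_Icc {ξ v : ℝ → ℝ} {a b C : ℝ}
    (hξC : ∀ s ∈ Icc a b, |ξ s| ≤ C) (hv : ContinuousOn v (Icc a b))
    (hv0 : ∀ s ∈ Icc a b, 0 ≤ v s) : ∃ M > 0, ∀ s ∈ Icc a b, exp (-ξ s) * v s ∈ Icc 0 M := by
  obtain ⟨B, hB⟩ := isCompact_Icc.exists_bound_of_continuousOn hv
  refine ⟨exp C * |B| + 1, by positivity, fun s hs ↦ ⟨mul_nonneg (exp_pos _).le (hv0 s hs), ?_⟩⟩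
  have hexp : exp (-ξ s) ≤ exp C := exp_le_exp.2 ((neg_le_abs _).trans (hξC s hs))
  have hvB : v s ≤ |B| := (le_abs_self _).trans ((hB s hs).trans (le_abs_self _))
  linarith [mul_le_mul hexp hvB (hv0 s hs) (exp_pos C).le]

theorem exp_mul_sub_exp_mul_le_of_lipschitzOnWith {φ₁ φ₂ : ℝ → ℝ} {S : Set ℝ} {K : NNReal}
    (hφ₁ : LipschitzOnWith K φ₁ S) {x y₁ y₂ : ℝ} (h₁ : exp (-x) * y₁ ∈ S)
    (h₂ : exp (-x) * y₂ ∈ S) (hφ : φ₂ (exp (-x) * y₂) ≤ φ₁ (exp (-x) * y₂)) :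
    exp x * φ₂ (exp (-x) * y₂) - exp x * φ₁ (exp (-x) * y₁) ≤ K * |y₁ - y₂| := by
  have hlip : φ₁ (exp (-x) * y₂) - φ₁ (exp (-x) * y₁) ≤ K * (exp (-x) * |y₁ - y₂|) := by
    have h := hφ₁.dist_le_mul _ h₂ _ h₁
    rw [Real.dist_eq, Real.dist_eq, ← mul_sub, abs_mul, abs_of_pos (exp_pos _),
      abs_sub_comm y₂] at h
    exact (le_abs_self _).trans h
  calc exp x * φ₂ (exp (-x) * y₂) - exp x * φ₁ (exp (-x) * y₁)
      ≤ exp x * (K * (exp (-x) * |y₁ - y₂|)) := by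
        rw [← mul_sub]; exact mul_le_mul_of_nonneg_left (by linarith) (exp_pos x).le
    _ = K * |y₁ - y₂| := by rw [exp_neg]; field_simp

theorem stmt12_general (t r0 : ℝ)
    (ξ : ℝ → ℝ) (hξmeas : Measurable ξ)
    (hξbdd : ∃ C : ℝ, ∀ s ∈ Set.Icc r0 t, |ξ s| ≤ C)
    (φ1 φ2 : ℝ → ℝ)
    (hφ1lip : ∀ M : ℝ, 0 < M → ∃ K : NNReal, LipschitzOnWith K φ1 (Set.Icc 0 M))
    (hφ2lip : ∀ M : ℝ, 0 < M → ∃ K : NNReal, LipschitzOnWith K φ2 (Set.Icc 0 M))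
    (hφ : ∀ z : ℝ, 0 ≤ z → φ2 z ≤ φ1 z)
    (lam1 lam2 : ℝ) (hlam : lam1 ≤ lam2)
    (v1 v2 : ℝ → ℝ)
    (hv1cont : ContinuousOn v1 (Set.Icc r0 t))
    (hv2cont : ContinuousOn v2 (Set.Icc r0 t))
    (hv1pos : ∀ r ∈ Set.Icc r0 t, 0 ≤ v1 r)
    (hv2pos : ∀ r ∈ Set.Icc r0 t, 0 ≤ v2 r)
    (hv1eq : ∀ r ∈ Set.Icc r0 t,
      v1 r = lam1 - ∫ s in r..t, Real.exp (ξ s) * φ1 (Real.exp (-ξ s) * v1 s))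
    (hv2eq : ∀ r ∈ Set.Icc r0 t,
      v2 r = lam2 - ∫ s in r..t, Real.exp (ξ s) * φ2 (Real.exp (-ξ s) * v2 s)) :
    ∀ r ∈ Set.Icc r0 t, v1 r ≤ v2 r := by
  obtain ⟨C, hC⟩ := hξbdd
  obtain ⟨M₁, hM₁, hv1M⟩ := exists_pos_forall_exp_neg_mul_mem_Icc hC hv1cont hv1pos
  obtain ⟨M₂, -, hv2M⟩ := exists_pos_forall_exp_neg_mul_mem_Icc hC hv2cont hv2pos
  have hv1M' s hs : exp (-ξ s) * v1 s ∈ Icc 0 (max M₁ M₂) :=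
    Icc_subset_Icc_right (le_max_left _ _) (hv1M s hs)
  have hv2M' s hs : exp (-ξ s) * v2 s ∈ Icc 0 (max M₁ M₂) :=
    Icc_subset_Icc_right (le_max_right _ _) (hv2M s hs)
  obtain ⟨K, hφ1K⟩ := hφ1lip _ (lt_max_of_lt_left hM₁)
  obtain ⟨K₂, hφ2K⟩ := hφ2lip _ (lt_max_of_lt_left hM₁)
  have hg1 := integrableOn_exp_mul_comp_exp_neg_mul hξmeas hC hv1cont hφ1K.continuousOn hv1M'
  have hg2 := integrableOn_exp_mul_comp_exp_neg_mul hξmeas hC hv2cont hφ2K.continuousOn hv2M'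
  have hw : ∀ r ∈ Icc r0 t, v1 r - v2 r = (lam1 - lam2) + ∫ s in r..t,
      (exp (ξ s) * φ2 (exp (-ξ s) * v2 s) - exp (ξ s) * φ1 (exp (-ξ s) * v1 s)) := fun r hr ↦ by
    have hsub : uIcc r t ⊆ Icc r0 t := uIcc_subset_Icc hr (right_mem_Icc.2 (hr.1.trans hr.2))
    rw [integral_sub (hg2.mono_set hsub).intervalIntegrable (hg1.mono_set hsub).intervalIntegrable,
      hv1eq r hr, hv2eq r hr]
    ring
  have hpos := posPart_le_mul_integral_of_eq_add_integral (w := fun s ↦ v1 s - v2 s)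
    K.coe_nonneg (sub_nonpos.2 hlam) (hv1cont.sub hv2cont) (hg2.sub hg1) hw fun s hs hws ↦ by
      rw [← abs_of_nonneg hws]
      exact exp_mul_sub_exp_mul_le_of_lipschitzOnWith hφ1K (hv1M' s hs) (hv2M' s hs)
        (hφ _ (hv2M' s hs).1)
  intro r hr
  have hzero := nonpos_of_le_mul_integral (u := fun s ↦ max (v1 s - v2 s) 0) K.coe_nonneg
    ((hv1cont.sub hv2cont).sup continuousOn_const) hpos r hr
  linarith [le_max_left (v1 r - v2 r) 0]

/-- Comparison theorem for backward Volterra integral equations: if `φ1 ≥ φ2` on `ℝ₊`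
(both locally Lipschitz on `ℝ₊`), `0 ≤ λ1 ≤ λ2`, `ξ` is measurable and bounded on
`[r0, t]`, and `v1, v2 : [r0, t] → ℝ₊` are continuous solutions of
`v_i(r) = λ_i − ∫_r^t e^{ξ(s)} φ_i(e^{−ξ(s)} v_i(s)) ds`, then `v1 ≤ v2` on `[r0, t]`. -/
theorem stmt12 (t r0 : ℝ) (hr0 : r0 ≤ t)
    (ξ : ℝ → ℝ) (hξmeas : Measurable ξ)
    (hξbdd : ∃ C : ℝ, ∀ s ∈ Set.Icc r0 t, |ξ s| ≤ C)
    (φ1 φ2 : ℝ → ℝ)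
    (hφ1lip : ∀ M : ℝ, 0 < M → ∃ K : NNReal, LipschitzOnWith K φ1 (Set.Icc 0 M))
    (hφ2lip : ∀ M : ℝ, 0 < M → ∃ K : NNReal, LipschitzOnWith K φ2 (Set.Icc 0 M))
    (hφ : ∀ z : ℝ, 0 ≤ z → φ2 z ≤ φ1 z)
    (lam1 lam2 : ℝ) (hlam1 : 0 ≤ lam1) (hlam : lam1 ≤ lam2)
    (v1 v2 : ℝ → ℝ)
    (hv1cont : ContinuousOn v1 (Set.Icc r0 t))
    (hv2cont : ContinuousOn v2 (Set.Icc r0 t))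
    (hv1pos : ∀ r ∈ Set.Icc r0 t, 0 ≤ v1 r)
    (hv2pos : ∀ r ∈ Set.Icc r0 t, 0 ≤ v2 r)
    (hv1eq : ∀ r ∈ Set.Icc r0 t,
      v1 r = lam1 - ∫ s in r..t, Real.exp (ξ s) * φ1 (Real.exp (-ξ s) * v1 s))
    (hv2eq : ∀ r ∈ Set.Icc r0 t,
      v2 r = lam2 - ∫ s in r..t, Real.exp (ξ s) * φ2 (Real.exp (-ξ s) * v2 s)) :
    ∀ r ∈ Set.Icc r0 t, v1 r ≤ v2 r :=
  stmt12_general t r0 ξ hξmeas hξbdd φ1 φ2 hφ1lip hφ2lip hφ lam1 lam2 hlam v1 v2 hv1cont hv2cont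
    hv1pos hv2pos hv1eq hv2eq
end

section
/- Let b = (b_ij) be a real 2×2 matrix, c1, c2 ≥ 0, and m1, m2 σ-finite measures on ℝ₊² supported by ℝ₊² \ {0} with ∫(z1 ∧ z1² + z2) m1(dz) + ∫(z2 ∧ z2² + z1) m2(dz) < ∞, satisfying b12 + ∫ z2 m1(dz) ≤ 0 and b21 + ∫ z1 m2(dz) ≤ 0. Define φ = (φ1, φ2) by φ1(λ) = b11 λ1 + b12 λ2 + c1 λ1² + ∫(e^{−⟨λ,z⟩} − 1 + ⟨λ,z⟩) m1(dz), φ2(λ) = b21 λ1 + b22 λ2 + c2 λ2² + ∫(e^{−⟨λ,z⟩} − 1 + ⟨λ,z⟩) m2(dz), and φ̃ = (φ̃1, φ̃2) by φ̃1(λ) = b11 λ1 + b12 λ2 + c1 λ1² + ∫(e^{−z1 λ1} − 1 + z1 λ1) m1(dz), φ̃2(λ) = b21 λ1 + b22 λ2 + c2 λ2² + ∫(e^{−z2 λ2} − 1 + z2 λ2) m2(dz). Let r0 ≤ t, let ξ : [r0, t] → ℝ be measurable and bounded, fix λ ∈ ℝ₊², and suppose u, Ũ : [r0, t] → ℝ₊²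 are continuous and satisfy u^{(i)}(r) = λ_i − ∫_r^t e^{ξ(s)} φ_i(e^{−ξ(s)} u(s)) ds and Ũ^{(i)}(r) = λ_i − ∫_r^t e^{ξ(s)} φ̃_i(e^{−ξ(s)} Ũ(s)) ds for i = 1, 2 and all r ∈ [r0, t]. Then u^{(i)}(r) ≤ Ũ^{(i)}(r) for i = 1, 2 and all r ∈ [r0, t]. -/
open MeasureTheory Real

/-- The closed first quadrant of `ℝ²`. -/
def quadrant : Set (ℝ × ℝ) := {p | 0 ≤ p.1 ∧ 0 ≤ p.2}

/-- First component of the two-type branching mechanism `φ`. -/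
noncomputable def phi1 (b : Matrix (Fin 2) (Fin 2) ℝ) (c1 : ℝ) (m1 : Measure (ℝ × ℝ))
    (l : ℝ × ℝ) : ℝ :=
  b 0 0 * l.1 + b 0 1 * l.2 + c1 * l.1 ^ 2
    + ∫ z, (Real.exp (-(l.1 * z.1 + l.2 * z.2)) - 1 + (l.1 * z.1 + l.2 * z.2)) ∂m1

/-- Second component of the two-type branching mechanism `φ`. -/
noncomputable def phi2 (b : Matrix (Fin 2) (Fin 2) ℝ) (c2 : ℝ) (m2 : Measure (ℝ × ℝ))
    (l : ℝ × ℝ) : ℝ :=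
  b 1 0 * l.1 + b 1 1 * l.2 + c2 * l.2 ^ 2
    + ∫ z, (Real.exp (-(l.1 * z.1 + l.2 * z.2)) - 1 + (l.1 * z.1 + l.2 * z.2)) ∂m2

/-- First component of the decoupled branching mechanism `φ̃`. -/
noncomputable def phiTilde1 (b : Matrix (Fin 2) (Fin 2) ℝ) (c1 : ℝ) (m1 : Measure (ℝ × ℝ))
    (l : ℝ × ℝ) : ℝ :=
  b 0 0 * l.1 + b 0 1 * l.2 + c1 * l.1 ^ 2
    + ∫ z, (Real.exp (-(z.1 * l.1)) - 1 + z.1 * l.1) ∂m1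

/-- Second component of the decoupled branching mechanism `φ̃`. -/
noncomputable def phiTilde2 (b : Matrix (Fin 2) (Fin 2) ℝ) (c2 : ℝ) (m2 : Measure (ℝ × ℝ))
    (l : ℝ × ℝ) : ℝ :=
  b 1 0 * l.1 + b 1 1 * l.2 + c2 * l.2 ^ 2
    + ∫ z, (Real.exp (-(z.2 * l.2)) - 1 + z.2 * l.2) ∂m2

/-!
Write `gᵢ = u⁽ⁱ⁾ - Ũ⁽ⁱ⁾`, so that `gᵢ(r) = ∫_r^t e^{ξ} (φ̃ᵢ(e^{-ξ} Ũ) - φᵢ(e^{-ξ} u)) ds`.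
At a time where `g₁ > 0`, the jump part of `φ̃₁` at `e^{-ξ} Ũ` is dominated by that of `φ₁` at
`e^{-ξ} u`, because `x ↦ e^{-x} - 1 + x` is increasing on `[0, ∞)` and `φ̃₁` ignores `z₂`; the
quadratic part is dominated as well. Hence the integrand is at most `-b₁₁ g₁ - b₁₂ g₂`, which is
`≤ K (g₁⁺ + g₂⁺)` with `K = |b₁₁| + |b₁₂|`, since admissibility forces `b₁₂ ≤ 0`. Integrating
from `r` up to the first zero of `g₁` gives `g₁⁺(r) ≤ K ∫_r^t (g₁⁺ + g₂⁺)`; interchanging the two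
types gives the same kind of bound for `g₂⁺`, and Grönwall's inequality forces `g₁⁺ + g₂⁺ = 0`.
-/

open Set

noncomputable def jumpKernel (x : ℝ) : ℝ := exp (-x) - 1 + x

@[fun_prop]
lemma continuous_jumpKernel : Continuous jumpKernel := by
  unfold jumpKernel; fun_prop

lemma jumpKernel_nonneg (x : ℝ) : 0 ≤ jumpKernel x := by
  unfold jumpKernel; linarith [add_one_le_exp (-x)]

lemma jumpKernel_le_jumpKernel {x y : ℝ} (hx : 0 ≤ x) (hxy : x ≤ y) :
    jumpKernel x ≤ jumpKernel y := by
  have h1 : exp (-x) ≤ 1 := exp_le_one_iff.2 (by linarith)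
  have h2 : exp (-y) = exp (-x) * exp (-(y - x)) := by rw [← exp_add]; ring_nf
  unfold jumpKernel
  nlinarith [add_one_le_exp (-(y - x)), exp_pos (-x)]

lemma jumpKernel_le_self {x : ℝ} (hx : 0 ≤ x) : jumpKernel x ≤ x := by
  unfold jumpKernel; linarith [exp_le_one_iff.2 (neg_nonpos.2 hx)]

lemma jumpKernel_le_sq {x : ℝ} (hx : 0 ≤ x) : jumpKernel x ≤ x ^ 2 := by
  -- `(1 + x) e^{-x} ≤ 1` gives `jumpKernel x ≤ x (1 - e^{-x})`, and `1 - e^{-x} ≤ x`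
  have h1 : (1 + x) * exp (-x) ≤ 1 := by
    have := mul_le_mul_of_nonneg_right (add_one_le_exp x) (exp_pos (-x)).le
    rwa [← exp_add, add_neg_cancel, exp_zero, add_comm] at this
  unfold jumpKernel
  nlinarith [add_one_le_exp (-x)]

lemma jumpKernel_add_le (x : ℝ) {y : ℝ} (hy : 0 ≤ y) :
    jumpKernel (x + y) ≤ jumpKernel x + y := by
  unfold jumpKernel; linarith [exp_le_exp.2 (by linarith : -(x + y) ≤ -x)]

lemma jumpKernel_le_moment {a c z₁ z₂ : ℝ} (ha : 0 ≤ a) (hc : 0 ≤ c) (hz₁ : 0 ≤ z₁)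
    (hz₂ : 0 ≤ z₂) :
    jumpKernel (a * z₁ + c * z₂) ≤ (a + a ^ 2 + c) * (min z₁ (z₁ ^ 2) + z₂) := by
  have hsplit := jumpKernel_add_le (a * z₁) (mul_nonneg hc hz₂)
  have hmin : 0 ≤ min z₁ (z₁ ^ 2) := le_min hz₁ (sq_nonneg z₁)
  have hfst : jumpKernel (a * z₁) ≤ (a + a ^ 2) * min z₁ (z₁ ^ 2) := by
    rcases le_total z₁ 1 with h | h
    · rw [min_eq_right (by nlinarith)]
      nlinarith [jumpKernel_le_sq (mul_nonneg ha hz₁), mul_nonneg ha (sq_nonneg z₁)]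
    · rw [min_eq_left (by nlinarith)]
      nlinarith [jumpKernel_le_self (mul_nonneg ha hz₁), mul_nonneg (sq_nonneg a) hz₁]
  nlinarith [mul_nonneg (add_nonneg ha (sq_nonneg a)) hz₂, mul_nonneg hc hmin]

lemma isClosed_quadrant : IsClosed quadrant :=
  (isClosed_le continuous_const continuous_fst).inter (isClosed_le continuous_const continuous_snd)

lemma smul_mem_quadrant {a : ℝ} {v : ℝ × ℝ} (ha : 0 ≤ a) (hv : v ∈ quadrant) :
    a • v ∈ quadrant :=
  ⟨mul_nonneg ha hv.1, mul_nonneg ha hv.2⟩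

section JumpIntegral

variable {m : Measure (ℝ × ℝ)}

lemma ae_mem_quadrant (hsupp : m quadrantᶜ = 0) : ∀ᵐ z ∂m, z ∈ quadrant :=
  ae_iff.2 hsupp

lemma integrable_moment (hsupp : m quadrantᶜ = 0)
    (hmom : ∫⁻ z, ENNReal.ofReal (min z.1 (z.1 ^ 2) + z.2) ∂m < ⊤) :
    Integrable (fun z : ℝ × ℝ => min z.1 (z.1 ^ 2) + z.2) m := by
  have hnn : 0 ≤ᵐ[m] fun z : ℝ × ℝ => min z.1 (z.1 ^ 2) + z.2 :=
    (ae_mem_quadrant hsupp).mono fun z hz =>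
      add_nonneg (le_min hz.1 (sq_nonneg _)) hz.2
  exact ⟨(by fun_prop : Continuous fun z : ℝ × ℝ => min z.1 (z.1 ^ 2) + z.2).aestronglyMeasurable,
    (hasFiniteIntegral_iff_ofReal hnn).2 hmom⟩

lemma integrable_jumpKernel (hsupp : m quadrantᶜ = 0)
    (hmom : ∫⁻ z, ENNReal.ofReal (min z.1 (z.1 ^ 2) + z.2) ∂m < ⊤) {l : ℝ × ℝ}
    (hl : l ∈ quadrant) :
    Integrable (fun z : ℝ × ℝ => jumpKernel (l.1 * z.1 + l.2 * z.2)) m := by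
  refine ((integrable_moment hsupp hmom).const_mul (l.1 + l.1 ^ 2 + l.2)).mono'
    (by fun_prop : Continuous _).aestronglyMeasurable ?_
  filter_upwards [ae_mem_quadrant hsupp] with z hz
  rw [Real.norm_eq_abs, abs_of_nonneg (jumpKernel_nonneg _)]
  exact jumpKernel_le_moment hl.1 hl.2 hz.1 hz.2

lemma integral_jumpKernel_le (hsupp : m quadrantᶜ = 0)
    (hmom : ∫⁻ z, ENNReal.ofReal (min z.1 (z.1 ^ 2) + z.2) ∂m < ⊤) {l : ℝ × ℝ}
    (hl : l ∈ quadrant) :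
    ∫ z, jumpKernel (l.1 * z.1 + l.2 * z.2) ∂m
      ≤ (l.1 + l.1 ^ 2 + l.2) * ∫ z, (min z.1 (z.1 ^ 2) + z.2) ∂m := by
  rw [← integral_const_mul]
  refine integral_mono_of_nonneg (ae_of_all _ fun z => jumpKernel_nonneg _)
    ((integrable_moment hsupp hmom).const_mul _) ?_
  filter_upwards [ae_mem_quadrant hsupp] with z hz
  exact jumpKernel_le_moment hl.1 hl.2 hz.1 hz.2

lemma integral_jumpKernel_mul_fst_le (hsupp : m quadrantᶜ = 0)
    (hmom : ∫⁻ z, ENNReal.ofReal (min z.1 (z.1 ^ 2) + z.2) ∂m < ⊤) {x : ℝ × ℝ}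
    (hx : x ∈ quadrant) {a : ℝ} (ha : 0 ≤ a) (hax : a ≤ x.1) :
    ∫ z, jumpKernel (z.1 * a) ∂m ≤ ∫ z, jumpKernel (x.1 * z.1 + x.2 * z.2) ∂m := by
  refine integral_mono_of_nonneg (ae_of_all _ fun z => jumpKernel_nonneg _)
    (integrable_jumpKernel hsupp hmom hx) ?_
  filter_upwards [ae_mem_quadrant hsupp] with z hz
  exact jumpKernel_le_jumpKernel (mul_nonneg hz.1 ha)
    (by nlinarith [mul_nonneg hx.2 hz.2, mul_le_mul_of_nonneg_left hax hz.1])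

end JumpIntegral

def QuadrantLocallyBounded (F : ℝ × ℝ → ℝ) : Prop :=
  ∀ M, ∃ B, ∀ v ∈ quadrant, ‖v‖ ≤ M → |F v| ≤ B

lemma Continuous.quadrantLocallyBounded {F : ℝ × ℝ → ℝ} (hF : Continuous F) :
    QuadrantLocallyBounded F := by
  intro M
  obtain ⟨B, hB⟩ := (isCompact_closedBall (0 : ℝ × ℝ) M).exists_bound_of_continuousOn
    hF.continuousOn
  exact ⟨B, fun v _ hv => hB v (mem_closedBall_zero_iff.2 hv)⟩

lemma QuadrantLocallyBounded.add {F G : ℝ × ℝ → ℝ} (hF : QuadrantLocallyBounded F)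
    (hG : QuadrantLocallyBounded G) : QuadrantLocallyBounded fun v => F v + G v := by
  intro M
  obtain ⟨B, hB⟩ := hF M
  obtain ⟨B', hB'⟩ := hG M
  exact ⟨B + B', fun v hv hvM => (abs_add_le _ _).trans (add_le_add (hB v hv hvM) (hB' v hv hvM))⟩

lemma QuadrantLocallyBounded.of_le {F G : ℝ × ℝ → ℝ} (hG : QuadrantLocallyBounded G)
    (hFG : ∀ v ∈ quadrant, 0 ≤ F v ∧ F v ≤ G v) : QuadrantLocallyBounded F := by
  intro M
  obtain ⟨B, hB⟩ := hG M
  refine ⟨B, fun v hv hvM => ?_⟩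
  rw [abs_of_nonneg (hFG v hv).1]
  exact (hFG v hv).2.trans ((le_abs_self _).trans (hB v hv hvM))

section Mechanism

variable (b : Matrix (Fin 2) (Fin 2) ℝ) (c : ℝ) (m : Measure (ℝ × ℝ))

lemma phi1_eq (l : ℝ × ℝ) :
    phi1 b c m l = b 0 0 * l.1 + b 0 1 * l.2 + c * l.1 ^ 2
      + ∫ z, jumpKernel (l.1 * z.1 + l.2 * z.2) ∂m := rfl

lemma phiTilde1_eq (l : ℝ × ℝ) :
    phiTilde1 b c m l = b 0 0 * l.1 + b 0 1 * l.2 + c * l.1 ^ 2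
      + ∫ z, jumpKernel (z.1 * l.1) ∂m := rfl

lemma measurable_phi1 [SFinite m] : Measurable (phi1 b c m) := by
  have hjump : StronglyMeasurable fun l : ℝ × ℝ => ∫ z, jumpKernel (l.1 * z.1 + l.2 * z.2) ∂m :=
    StronglyMeasurable.integral_prod_right'
      (f := fun p : (ℝ × ℝ) × (ℝ × ℝ) => jumpKernel (p.1.1 * p.2.1 + p.1.2 * p.2.2))
      (by fun_prop : Continuous _).stronglyMeasurable
  exact (by fun_prop : Measurable fun l : ℝ × ℝ => b 0 0 * l.1 + b 0 1 * l.2 + c * l.1 ^ 2).add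
    hjump.measurable

lemma measurable_phiTilde1 [SFinite m] : Measurable (phiTilde1 b c m) := by
  have hjump : StronglyMeasurable fun l : ℝ × ℝ => ∫ z, jumpKernel (z.1 * l.1) ∂m :=
    StronglyMeasurable.integral_prod_right'
      (f := fun p : (ℝ × ℝ) × (ℝ × ℝ) => jumpKernel (p.2.1 * p.1.1))
      (by fun_prop : Continuous _).stronglyMeasurable
  exact (by fun_prop : Measurable fun l : ℝ × ℝ => b 0 0 * l.1 + b 0 1 * l.2 + c * l.1 ^ 2).add
    hjump.measurable

variable {b c m}

/-- `φ̃₁` only sees the first coordinate in its jump part, and `jumpKernel` is monotone on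
`[0, ∞)`. -/
lemma phiTilde1_sub_phi1_le (hc : 0 ≤ c) (hsupp : m quadrantᶜ = 0)
    (hmom : ∫⁻ z, ENNReal.ofReal (min z.1 (z.1 ^ 2) + z.2) ∂m < ⊤) {x y : ℝ × ℝ}
    (hx : x ∈ quadrant) (hy : y ∈ quadrant) (hyx : y.1 ≤ x.1) :
    phiTilde1 b c m y - phi1 b c m x ≤ b 0 0 * (y.1 - x.1) + b 0 1 * (y.2 - x.2) := by
  have hjump := integral_jumpKernel_mul_fst_le hsupp hmom hx hy.1 hyx
  have hsq : c * y.1 ^ 2 ≤ c * x.1 ^ 2 :=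
    mul_le_mul_of_nonneg_left (pow_le_pow_left₀ hy.1 hyx 2) hc
  rw [phiTilde1_eq, phi1_eq]
  linarith

lemma quadrantLocallyBounded_integral_jumpKernel (hsupp : m quadrantᶜ = 0)
    (hmom : ∫⁻ z, ENNReal.ofReal (min z.1 (z.1 ^ 2) + z.2) ∂m < ⊤) :
    QuadrantLocallyBounded fun l => ∫ z, jumpKernel (l.1 * z.1 + l.2 * z.2) ∂m :=
  (by fun_prop : Continuous fun l : ℝ × ℝ =>
      (l.1 + l.1 ^ 2 + l.2) * ∫ z, (min z.1 (z.1 ^ 2) + z.2) ∂m).quadrantLocallyBounded.of_le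
    fun _ hl => ⟨integral_nonneg fun _ => jumpKernel_nonneg _,
      integral_jumpKernel_le hsupp hmom hl⟩

lemma quadrantLocallyBounded_phi1 (hsupp : m quadrantᶜ = 0)
    (hmom : ∫⁻ z, ENNReal.ofReal (min z.1 (z.1 ^ 2) + z.2) ∂m < ⊤) :
    QuadrantLocallyBounded (phi1 b c m) :=
  (by fun_prop : Continuous fun l : ℝ × ℝ =>
      b 0 0 * l.1 + b 0 1 * l.2 + c * l.1 ^ 2).quadrantLocallyBounded.add
    (quadrantLocallyBounded_integral_jumpKernel hsupp hmom)

lemma quadrantLocallyBounded_phiTilde1 (hsupp : m quadrantᶜ = 0)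
    (hmom : ∫⁻ z, ENNReal.ofReal (min z.1 (z.1 ^ 2) + z.2) ∂m < ⊤) :
    QuadrantLocallyBounded (phiTilde1 b c m) :=
  (by fun_prop : Continuous fun l : ℝ × ℝ =>
      b 0 0 * l.1 + b 0 1 * l.2 + c * l.1 ^ 2).quadrantLocallyBounded.add
    ((quadrantLocallyBounded_integral_jumpKernel hsupp hmom).of_le fun _ hl =>
      ⟨integral_nonneg fun _ => jumpKernel_nonneg _,
        integral_jumpKernel_mul_fst_le hsupp hmom hl hl.1 le_rfl⟩)

end Mechanism

section Swap

variable (b : Matrix (Fin 2) (Fin 2) ℝ) (c : ℝ) (m : Measure (ℝ × ℝ))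

lemma phi2_eq_phi1_swap (l : ℝ × ℝ) :
    phi2 b c m l = phi1 (b.submatrix Fin.rev Fin.rev) c (m.map Prod.swap) l.swap := by
  have hjump : ∫ z, jumpKernel (l.swap.1 * z.swap.1 + l.swap.2 * z.swap.2) ∂m
      = ∫ z, jumpKernel (l.1 * z.1 + l.2 * z.2) ∂m := by
    simp only [Prod.fst_swap, Prod.snd_swap, add_comm (l.2 * _)]
  rw [phi1_eq, integral_map measurable_swap.aemeasurable
    (by fun_prop : Continuous _).aestronglyMeasurable, hjump]
  change _ = b 1 1 * l.2 + b 1 0 * l.1 + c * l.2 ^ 2 + _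
  rw [phi2]
  congr 1
  ring

lemma phiTilde2_eq_phiTilde1_swap (l : ℝ × ℝ) :
    phiTilde2 b c m l
      = phiTilde1 (b.submatrix Fin.rev Fin.rev) c (m.map Prod.swap) l.swap := by
  rw [phiTilde1_eq, integral_map measurable_swap.aemeasurable
    (by fun_prop : Continuous _).aestronglyMeasurable]
  change _ = b 1 1 * l.2 + b 1 0 * l.1 + c * l.2 ^ 2 + ∫ z, jumpKernel (z.2 * l.2) ∂m
  rw [phiTilde2]
  congr 1
  ring

variable {m}

lemma map_swap_quadrant_compl (hsupp : m quadrantᶜ = 0) : m.map Prod.swap quadrantᶜ = 0 := by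
  rw [Measure.map_apply measurable_swap isClosed_quadrant.measurableSet.compl]
  convert hsupp using 2
  ext z
  simp [quadrant, and_comm]

end Swap

lemma integrableOn_exp_mul_comp_smul {F : ℝ × ℝ → ℝ} (hFm : Measurable F)
    (hFb : QuadrantLocallyBounded F) {ξ : ℝ → ℝ} (hξm : Measurable ξ) {a b : ℝ}
    (hξb : ∃ C, ∀ s ∈ Icc a b, |ξ s| ≤ C) {w : ℝ → ℝ × ℝ} (hw : ContinuousOn w (Icc a b))
    (hwq : ∀ s ∈ Icc a b, w s ∈ quadrant) :
    IntegrableOn (fun s => exp (ξ s) * F (exp (-ξ s) • w s)) (Icc a b) := by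
  obtain ⟨C, hC⟩ := hξb
  obtain ⟨R, hR⟩ := isCompact_Icc.exists_bound_of_continuousOn hw
  obtain ⟨B, hB⟩ := hFb (exp C * R)
  have hmeas : AEStronglyMeasurable (fun s => exp (ξ s) * F (exp (-ξ s) • w s))
      (volume.restrict (Icc a b)) :=
    ((measurable_exp.comp hξm).aemeasurable.mul (hFm.comp_aemeasurable
      ((measurable_exp.comp hξm.neg).aemeasurable.smul
        (hw.aemeasurable measurableSet_Icc)))).aestronglyMeasurable
  refine Integrable.of_bound hmeas (exp C * B) (ae_restrict_of_forall_mem measurableSet_Icc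
    fun s hs => ?_)
  have hξs := abs_le.1 (hC s hs)
  have hnorm : ‖exp (-ξ s) • w s‖ ≤ exp C * R := by
    rw [norm_smul, Real.norm_of_nonneg (exp_pos _).le]
    exact mul_le_mul (exp_le_exp.2 (by linarith)) (hR s hs) (norm_nonneg _) (exp_pos _).le
  rw [norm_mul, Real.norm_of_nonneg (exp_pos _).le, Real.norm_eq_abs]
  exact mul_le_mul (exp_le_exp.2 hξs.2)
    (hB _ (smul_mem_quadrant (exp_pos _).le (hwq s hs)) hnorm) (abs_nonneg _) (exp_pos _).le

lemma max_zero_le_integral_of_forall_pos_le {g Q h : ℝ → ℝ} {a b : ℝ}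
    (hg : ContinuousOn g (Icc a b)) (hQ : IntegrableOn Q (Icc a b))
    (hgQ : ∀ r ∈ Icc a b, g r = ∫ s in r..b, Q s) (hh : IntegrableOn h (Icc a b))
    (h0 : ∀ s ∈ Icc a b, 0 ≤ h s) (hQh : ∀ s ∈ Icc a b, 0 < g s → Q s ≤ h s) :
    ∀ r ∈ Icc a b, max (g r) 0 ≤ ∫ s in r..b, h s := by
  have hint : ∀ {f : ℝ → ℝ}, IntegrableOn f (Icc a b) → ∀ {x y : ℝ}, x ∈ Icc a b →
      y ∈ Icc a b → IntervalIntegrable f volume x y :=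
    fun hf _ _ hx hy => (hf.mono_set (uIcc_subset_Icc hx hy)).intervalIntegrable
  intro r hr
  have hb : b ∈ Icc a b := ⟨hr.1.trans hr.2, le_rfl⟩
  have hsub : Icc r b ⊆ Icc a b := Icc_subset_Icc_left hr.1
  rcases le_or_gt (g r) 0 with hgr | hgr
  · rw [max_eq_right hgr]
    exact intervalIntegral.integral_nonneg hr.2 fun s hs => h0 s (hsub hs)
  -- `τ` is the first zero of `g` to the right of `r`, so `Q ≤ h` on `(r, τ)`
  set S := Icc r b ∩ {s | g s ≤ 0}
  have hbS : b ∈ S := ⟨⟨hr.2, le_rfl⟩, by simp [hgQ b hb]⟩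
  have hS : IsClosed S := (hg.mono hsub).preimage_isClosed_of_isClosed isClosed_Icc isClosed_Iic
  have hSbdd : BddBelow S := ⟨r, fun _ hs => hs.1.1⟩
  set τ := sInf S
  have hτS : τ ∈ S := hS.csInf_mem ⟨b, hbS⟩ hSbdd
  have hτ : τ ∈ Icc a b := hsub hτS.1
  have hgτ : g τ ≤ 0 := hτS.2
  have hpos : ∀ s ∈ Ioo r τ, 0 < g s := fun s hs => not_le.1 fun hs' =>
    (csInf_le hSbdd ⟨⟨hs.1.le, hs.2.le.trans hτS.1.2⟩, hs'⟩).not_gt hs.2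
  have hsplit := intervalIntegral.integral_add_adjacent_intervals (hint hQ hr hτ) (hint hQ hτ hb)
  calc max (g r) 0 = g r := max_eq_left hgr.le
    _ ≤ g r - g τ := by linarith
    _ = ∫ s in r..τ, Q s := by rw [hgQ r hr, hgQ τ hτ]; linarith
    _ ≤ ∫ s in r..τ, h s :=
      intervalIntegral.integral_mono_on_of_le_Ioo hτS.1.1 (hint hQ hr hτ) (hint hh hr hτ)
        fun s hs => hQh s (hsub ⟨hs.1.le, hs.2.le.trans hτS.1.2⟩) (hpos s hs)
    _ ≤ ∫ s in r..b, h s :=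
      intervalIntegral.integral_mono_interval le_rfl hτS.1.1 hτS.1.2
        (ae_restrict_of_forall_mem measurableSet_Ioc fun s hs =>
          h0 s (hsub ⟨hs.1.le, hs.2⟩)) (hint hh hr hb)

lemma eq_zero_of_le_mul_integral {h : ℝ → ℝ} {a b C : ℝ} (hh : ContinuousOn h (Icc a b))
    (h0 : ∀ s ∈ Icc a b, 0 ≤ h s) (hle : ∀ r ∈ Icc a b, h r ≤ C * ∫ s in r..b, h s) :
    ∀ r ∈ Icc a b, h r = 0 := by
  intro r hr
  have hab : a ≤ b := hr.1.trans hr.2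
  set H := fun r => ∫ s in r..b, h s with hHdef
  have hhint : IntegrableOn h (Icc a b) := hh.integrableOn_Icc
  -- `e^{C r} H(r)` is nondecreasing on `[a, b]` and vanishes at `b`
  have hmono : MonotoneOn (fun r => exp (C * r) * H r) (Icc a b) := by
    refine monotoneOn_of_hasDerivWithinAt_nonneg (convex_Icc a b)
      (f' := fun r => exp (C * r) * (C * H r - h r)) ?_ ?_ ?_
    · refine (by fun_prop : Continuous fun r => exp (C * r)).continuousOn.mul ?_
      rw [← uIcc_of_le hab]
      exact intervalIntegral.continuousOn_primitive_interval_left (by rwa [uIcc_of_le hab])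
    · rw [interior_Icc]
      intro x hx
      have hHx : HasDerivAt H (-h x) x :=
        intervalIntegral.integral_hasDerivAt_left
          (hhint.mono_set (uIcc_subset_Icc ⟨hx.1.le, hx.2.le⟩ ⟨hab, le_rfl⟩)).intervalIntegrable
          ((hh.mono Ioo_subset_Icc_self).stronglyMeasurableAtFilter isOpen_Ioo x hx)
          (hh.continuousAt (Icc_mem_nhds hx.1 hx.2))
      refine ((((hasDerivAt_id x).const_mul C).exp.mul hHx).congr_deriv ?_).hasDerivWithinAt
      simp only [id]; ring
    · rw [interior_Icc]
      intro x hx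
      exact mul_nonneg (exp_pos _).le (by linarith [hle x (Ioo_subset_Icc_self hx)])
  have hHr : H r ≤ 0 := by
    have := hmono hr ⟨hab, le_rfl⟩ hr.2
    simp only [hHdef, intervalIntegral.integral_same, mul_zero] at this
    exact nonpos_of_mul_nonpos_right this (exp_pos _)
  have hH0 : 0 ≤ H r :=
    intervalIntegral.integral_nonneg hr.2 fun s hs => h0 s ⟨hr.1.trans hs.1, hs.2⟩
  have hle_r := hle r hr
  rw [show ∫ s in r..b, h s = 0 from le_antisymm hHr hH0, mul_zero] at hle_r
  exact le_antisymm hle_r (h0 r hr)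

lemma exp_mul_phiTilde1_sub_exp_mul_phi1_le {b : Matrix (Fin 2) (Fin 2) ℝ} {c : ℝ}
    {m : Measure (ℝ × ℝ)} (hc : 0 ≤ c) (hsupp : m quadrantᶜ = 0)
    (hmom : ∫⁻ z, ENNReal.ofReal (min z.1 (z.1 ^ 2) + z.2) ∂m < ⊤) (hb : b 0 1 ≤ 0) (k : ℝ)
    {x y : ℝ × ℝ} (hx : x ∈ quadrant) (hy : y ∈ quadrant) (hyx : y.1 ≤ x.1) :
    exp k * phiTilde1 b c m (exp (-k) • y) - exp k * phi1 b c m (exp (-k) • x)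
      ≤ (|b 0 0| + |b 0 1|) * (max (x.1 - y.1) 0 + max (x.2 - y.2) 0) := by
  set e := exp (-k)
  have he0 : 0 ≤ e := (exp_pos _).le
  have he : exp k * e = 1 := by rw [← exp_add, add_neg_cancel, exp_zero]
  have hcmp := mul_le_mul_of_nonneg_left
    (phiTilde1_sub_phi1_le (b := b) hc hsupp hmom (smul_mem_quadrant he0 hx)
      (smul_mem_quadrant he0 hy) (mul_le_mul_of_nonneg_left hyx he0)) (exp_pos k).le
  simp only [Prod.smul_fst, Prod.smul_snd, smul_eq_mul] at hcmp
  have hlin : exp k * (b 0 0 * (e * y.1 - e * x.1) + b 0 1 * (e * y.2 - e * x.2))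
      = b 0 0 * (y.1 - x.1) + b 0 1 * (y.2 - x.2) := by
    linear_combination (b 0 0 * (y.1 - x.1) + b 0 1 * (y.2 - x.2)) * he
  have h1 : b 0 0 * (y.1 - x.1) ≤ |b 0 0| * max (x.1 - y.1) 0 := by
    rw [max_eq_left (sub_nonneg.2 hyx)]
    nlinarith [neg_abs_le (b 0 0)]
  have h2 : b 0 1 * (y.2 - x.2) ≤ |b 0 1| * max (x.2 - y.2) 0 := by
    rw [abs_of_nonpos hb]
    nlinarith [le_max_left (x.2 - y.2) 0]
  have h3 := mul_nonneg (abs_nonneg (b 0 0)) (le_max_right (x.2 - y.2) 0)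
  have h4 := mul_nonneg (abs_nonneg (b 0 1)) (le_max_right (x.1 - y.1) 0)
  linarith

lemma max_fst_sub_le_mul_integral {b : Matrix (Fin 2) (Fin 2) ℝ} {c : ℝ}
    {m : Measure (ℝ × ℝ)} [SFinite m] (hc : 0 ≤ c) (hsupp : m quadrantᶜ = 0)
    (hmom : ∫⁻ z, ENNReal.ofReal (min z.1 (z.1 ^ 2) + z.2) ∂m < ⊤) (hb : b 0 1 ≤ 0)
    {t r0 : ℝ} {ξ : ℝ → ℝ} (hξm : Measurable ξ) (hξb : ∃ C, ∀ s ∈ Icc r0 t, |ξ s| ≤ C)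
    {lam : ℝ} {u U : ℝ → ℝ × ℝ} (hu : ContinuousOn u (Icc r0 t))
    (hU : ContinuousOn U (Icc r0 t)) (huq : ∀ r ∈ Icc r0 t, u r ∈ quadrant)
    (hUq : ∀ r ∈ Icc r0 t, U r ∈ quadrant)
    (hueq : ∀ r ∈ Icc r0 t,
      (u r).1 = lam - ∫ s in r..t, exp (ξ s) * phi1 b c m (exp (-ξ s) • u s))
    (hUeq : ∀ r ∈ Icc r0 t,
      (U r).1 = lam - ∫ s in r..t, exp (ξ s) * phiTilde1 b c m (exp (-ξ s) • U s)) :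
    ∀ r ∈ Icc r0 t, max ((u r).1 - (U r).1) 0 ≤ (|b 0 0| + |b 0 1|) *
      ∫ s in r..t, (max ((u s).1 - (U s).1) 0 + max ((u s).2 - (U s).2) 0) := by
  have hP := integrableOn_exp_mul_comp_smul (measurable_phi1 b c m)
    (quadrantLocallyBounded_phi1 hsupp hmom) hξm hξb hu huq
  have hPt := integrableOn_exp_mul_comp_smul (measurable_phiTilde1 b c m)
    (quadrantLocallyBounded_phiTilde1 hsupp hmom) hξm hξb hU hUq
  have hcont : ContinuousOn (fun s => max ((u s).1 - (U s).1) 0 + max ((u s).2 - (U s).2) 0)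
      (Icc r0 t) := by fun_prop
  intro r hr
  rw [← intervalIntegral.integral_const_mul]
  refine max_zero_le_integral_of_forall_pos_le (g := fun r => (u r).1 - (U r).1) (by fun_prop)
    (hPt.sub hP) (fun r hr => ?_) (hcont.integrableOn_Icc.const_mul _)
    (fun s _ => mul_nonneg (by positivity) (add_nonneg (le_max_right _ _) (le_max_right _ _)))
    (fun s hs hpos => exp_mul_phiTilde1_sub_exp_mul_phi1_le hc hsupp hmom hb (ξ s) (huq s hs)
      (hUq s hs) (sub_pos.1 hpos).le) r hr
  have hsub : uIcc r t ⊆ Icc r0 t := uIcc_subset_Icc hr ⟨hr.1.trans hr.2, le_rfl⟩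
  rw [Pi.sub_def, intervalIntegral.integral_sub (hPt.mono_set hsub).intervalIntegrable
    (hP.mono_set hsub).intervalIntegrable, hueq r hr, hUeq r hr]
  ring

theorem stmt13_general (b : Matrix (Fin 2) (Fin 2) ℝ) (c1 c2 : ℝ) (hc1 : 0 ≤ c1) (hc2 : 0 ≤ c2)
    (m1 m2 : Measure (ℝ × ℝ)) [SigmaFinite m1] [SigmaFinite m2]
    (hsupp1 : m1 quadrantᶜ = 0)
    (hsupp2 : m2 quadrantᶜ = 0)
    (hmom1 : ∫⁻ z, ENNReal.ofReal (min z.1 (z.1 ^ 2) + z.2) ∂m1 < ⊤)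
    (hmom2 : ∫⁻ z, ENNReal.ofReal (min z.2 (z.2 ^ 2) + z.1) ∂m2 < ⊤)
    (hadm1 : b 0 1 + ∫ z, z.2 ∂m1 ≤ 0)
    (hadm2 : b 1 0 + ∫ z, z.1 ∂m2 ≤ 0)
    (t r0 : ℝ)
    (ξ : ℝ → ℝ) (hξmeas : Measurable ξ)
    (hξbdd : ∃ C : ℝ, ∀ s ∈ Set.Icc r0 t, |ξ s| ≤ C)
    (lam : ℝ × ℝ)
    (u U : ℝ → ℝ × ℝ)
    (hucont : ContinuousOn u (Set.Icc r0 t))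
    (hUcont : ContinuousOn U (Set.Icc r0 t))
    (huquad : ∀ r ∈ Set.Icc r0 t, u r ∈ quadrant)
    (hUquad : ∀ r ∈ Set.Icc r0 t, U r ∈ quadrant)
    (hueq1 : ∀ r ∈ Set.Icc r0 t,
      (u r).1 = lam.1 - ∫ s in r..t,
        Real.exp (ξ s) * phi1 b c1 m1 (Real.exp (-ξ s) • u s))
    (hueq2 : ∀ r ∈ Set.Icc r0 t,
      (u r).2 = lam.2 - ∫ s in r..t,
        Real.exp (ξ s) * phi2 b c2 m2 (Real.exp (-ξ s) • u s))
    (hUeq1 : ∀ r ∈ Set.Icc r0 t,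
      (U r).1 = lam.1 - ∫ s in r..t,
        Real.exp (ξ s) * phiTilde1 b c1 m1 (Real.exp (-ξ s) • U s))
    (hUeq2 : ∀ r ∈ Set.Icc r0 t,
      (U r).2 = lam.2 - ∫ s in r..t,
        Real.exp (ξ s) * phiTilde2 b c2 m2 (Real.exp (-ξ s) • U s)) :
    ∀ r ∈ Set.Icc r0 t, (u r).1 ≤ (U r).1 ∧ (u r).2 ≤ (U r).2 := by
  have hb01 : b 0 1 ≤ 0 := by
    linarith [integral_nonneg_of_ae ((ae_mem_quadrant hsupp1).mono fun z hz => hz.2)]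
  have hb10 : b 1 0 ≤ 0 := by
    linarith [integral_nonneg_of_ae ((ae_mem_quadrant hsupp2).mono fun z hz => hz.1)]
  have hfst := max_fst_sub_le_mul_integral hc1 hsupp1 hmom1 hb01 hξmeas hξbdd hucont hUcont
    huquad hUquad hueq1 hUeq1
  -- the second component is the first one of the system with both types interchanged
  simp only [phi2_eq_phi1_swap, phiTilde2_eq_phiTilde1_swap] at hueq2 hUeq2
  have hsnd := max_fst_sub_le_mul_integral (u := fun r => (u r).swap)
    (U := fun r => (U r).swap) hc2 (map_swap_quadrant_compl hsupp2)
    (by rwa [lintegral_map (by fun_prop) measurable_swap]) hb10 hξmeas hξbdd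
    (continuous_swap.comp_continuousOn hucont) (continuous_swap.comp_continuousOn hUcont)
    (fun r hr => ⟨(huquad r hr).2, (huquad r hr).1⟩)
    (fun r hr => ⟨(hUquad r hr).2, (hUquad r hr).1⟩) hueq2 hUeq2
  have hzero := eq_zero_of_le_mul_integral
    (h := fun s => max ((u s).1 - (U s).1) 0 + max ((u s).2 - (U s).2) 0)
    (C := |b 0 0| + |b 0 1| + (|b 1 1| + |b 1 0|)) (by fun_prop)
    (fun s _ => add_nonneg (le_max_right _ _) (le_max_right _ _)) fun r hr => by
      have hswap : ∫ s in r..t, (max ((u s).2 - (U s).2) 0 + max ((u s).1 - (U s).1) 0)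
          = ∫ s in r..t, (max ((u s).1 - (U s).1) 0 + max ((u s).2 - (U s).2) 0) :=
        intervalIntegral.integral_congr fun s _ => add_comm _ _
      have h2 := hsnd r hr
      simp only [Prod.fst_swap, Prod.snd_swap, hswap] at h2
      change _ ≤ (|b 1 1| + |b 1 0|) * _ at h2
      linarith [hfst r hr]
  intro r hr
  have := hzero r hr
  constructor <;> linarith [le_max_left ((u r).1 - (U r).1) 0, le_max_left ((u r).2 - (U r).2) 0,
    le_max_right ((u r).1 - (U r).1) 0, le_max_right ((u r).2 - (U r).2) 0]

/-- Comparison of the random cumulant semigroups driven by `φ` and by `φ̃`: any continuous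
quadrant-valued solutions `u` and `Ũ` of the backward equations
`u⁽ⁱ⁾(r) = λ_i − ∫_r^t e^{ξ(s)} φ_i(e^{−ξ(s)} u(s)) ds` and
`Ũ⁽ⁱ⁾(r) = λ_i − ∫_r^t e^{ξ(s)} φ̃_i(e^{−ξ(s)} Ũ(s)) ds` satisfy `u⁽ⁱ⁾ ≤ Ũ⁽ⁱ⁾` on `[r0, t]`. -/
theorem stmt13 (b : Matrix (Fin 2) (Fin 2) ℝ) (c1 c2 : ℝ) (hc1 : 0 ≤ c1) (hc2 : 0 ≤ c2)
    (m1 m2 : Measure (ℝ × ℝ)) [SigmaFinite m1] [SigmaFinite m2]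
    (hsupp1 : m1 quadrantᶜ = 0) (hzero1 : m1 {0} = 0)
    (hsupp2 : m2 quadrantᶜ = 0) (hzero2 : m2 {0} = 0)
    (hmom1 : ∫⁻ z, ENNReal.ofReal (min z.1 (z.1 ^ 2) + z.2) ∂m1 < ⊤)
    (hmom2 : ∫⁻ z, ENNReal.ofReal (min z.2 (z.2 ^ 2) + z.1) ∂m2 < ⊤)
    (hadm1 : b 0 1 + ∫ z, z.2 ∂m1 ≤ 0)
    (hadm2 : b 1 0 + ∫ z, z.1 ∂m2 ≤ 0)
    (t r0 : ℝ) (hr0 : r0 ≤ t)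
    (ξ : ℝ → ℝ) (hξmeas : Measurable ξ)
    (hξbdd : ∃ C : ℝ, ∀ s ∈ Set.Icc r0 t, |ξ s| ≤ C)
    (lam : ℝ × ℝ) (hlam : lam ∈ quadrant)
    (u U : ℝ → ℝ × ℝ)
    (hucont : ContinuousOn u (Set.Icc r0 t))
    (hUcont : ContinuousOn U (Set.Icc r0 t))
    (huquad : ∀ r ∈ Set.Icc r0 t, u r ∈ quadrant)
    (hUquad : ∀ r ∈ Set.Icc r0 t, U r ∈ quadrant)
    (hueq1 : ∀ r ∈ Set.Icc r0 t,
      (u r).1 = lam.1 - ∫ s in r..t,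
        Real.exp (ξ s) * phi1 b c1 m1 (Real.exp (-ξ s) • u s))
    (hueq2 : ∀ r ∈ Set.Icc r0 t,
      (u r).2 = lam.2 - ∫ s in r..t,
        Real.exp (ξ s) * phi2 b c2 m2 (Real.exp (-ξ s) • u s))
    (hUeq1 : ∀ r ∈ Set.Icc r0 t,
      (U r).1 = lam.1 - ∫ s in r..t,
        Real.exp (ξ s) * phiTilde1 b c1 m1 (Real.exp (-ξ s) • U s))
    (hUeq2 : ∀ r ∈ Set.Icc r0 t,
      (U r).2 = lam.2 - ∫ s in r..t,
        Real.exp (ξ s) * phiTilde2 b c2 m2 (Real.exp (-ξ s) • U s)) :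
    ∀ r ∈ Set.Icc r0 t, (u r).1 ≤ (U r).1 ∧ (u r).2 ≤ (U r).2 :=
  stmt13_general b c1 c2 hc1 hc2 m1 m2 hsupp1 hsupp2 hmom1 hmom2 hadm1 hadm2 t r0 ξ hξmeas hξbdd lam
    u U hucont hUcont huquad hUquad hueq1 hueq2 hUeq1 hUeq2
end
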